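/- arXiv:1306.5307 — 2 statements merged into one kernel-verified Lean document; each statement's English description precedes it below -/
import Mathlib

section
/- Let N ≥ 1, X a real normed space, C ⊆ X a convex subset, T_1,…,T_N : C → C nonexpansive mappings extended cyclically by T_n := T_{((n−1) mod N)+1}, and (λ_n)_{n≥1} a sequence in [0,1] satisfying lim_{n→∞} λ_n = 0, ∑_{n=1}^∞ |λ_{n+N} − λ_n| < ∞ and ∑_{n=1}^∞ λ_n = ∞. Let u ∈ C and (x_n) be the iteration x_0 = u, x_{n+1} = T_{n+1}(λ_{n+1}·u + (1 − λ_{n+1})·x_n), and assume (x_n) is bounded. Then lim_{n→∞} ‖x_n − T_{n+N}T_{n+N−1}⋯T_{n+1}x_n‖ = 0. -/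
/-!
Write `yₙ = λₙ₊₁ u + (1 - λₙ₊₁) xₙ`, so that `xₙ₊₁ = Tₙ₊₁ yₙ`. Since `Tₙ₊₁₊N = Tₙ₊₁` is
nonexpansive, `aₙ = ‖xₙ₊N - xₙ‖` satisfies
`aₙ₊₁ ≤ (1 - λₙ₊₁₊N) aₙ + M |λₙ₊₁₊N - λₙ₊₁|` with `M` a bound for `‖xₙ - u‖`, and Xu's lemma
(`∑ tₙ = ∞`, `∑ bₙ < ∞`) gives `aₙ → 0`. Comparing the composition `Tₙ₊N ⋯ Tₙ₊₁` applied to `xₙ`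
with the orbit `xₙ₊₁, …, xₙ₊N` step by step costs at most `M (λₙ₊₁ + ⋯ + λₙ₊N) → 0`.
-/

/-- `iterComp T n N z` is the composition `T (n+N) (T (n+N-1) (⋯ (T (n+1) z)))`. -/
def iterComp {Y : Type*} (T : ℕ → Y → Y) (n : ℕ) : ℕ → Y → Y
  | 0, z => z
  | (k + 1), z => T (n + k + 1) (iterComp T n k z)

open Filter Finset Topology

theorem le_prod_one_sub_mul_add_sum {a t b : ℕ → ℝ} (ht : ∀ n, t n ∈ Set.Icc (0 : ℝ) 1)
    (hb : ∀ n, 0 ≤ b n) (hrec : ∀ n, a (n + 1) ≤ (1 - t n) * a n + b n) (m : ℕ) :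
    a m ≤ (∏ k ∈ range m, (1 - t k)) * a 0 + ∑ k ∈ range m, b k := by
  induction m with
  | zero => simp
  | succ m ih =>
    have hS : 0 ≤ ∑ k ∈ range m, b k := sum_nonneg fun k _ => hb k
    have h1 : 0 ≤ 1 - t m := sub_nonneg.2 (ht m).2
    rw [prod_range_succ, sum_range_succ]
    calc a (m + 1) ≤ (1 - t m) * a m + b m := hrec m
      _ ≤ (1 - t m) * ((∏ k ∈ range m, (1 - t k)) * a 0 + ∑ k ∈ range m, b k) + b m := by
        gcongr
      _ ≤ _ := by nlinarith [(ht m).1]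

theorem tendsto_prod_range_one_sub_zero {t : ℕ → ℝ} (ht : ∀ n, t n ∈ Set.Icc (0 : ℝ) 1)
    (hdiv : ¬ Summable t) : Tendsto (fun m => ∏ k ∈ range m, (1 - t k)) atTop (𝓝 0) := by
  have hexp : Tendsto (fun m => Real.exp (-∑ k ∈ range m, t k)) atTop (𝓝 0) :=
    Real.tendsto_exp_atBot.comp <| tendsto_neg_atTop_atBot.comp <|
      (not_summable_iff_tendsto_nat_atTop_of_nonneg fun n => (ht n).1).1 hdiv
  refine squeeze_zero (fun m => prod_nonneg fun k _ => sub_nonneg.2 (ht k).2) (fun m => ?_) hexp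
  rw [← sum_neg_distrib, Real.exp_sum]
  exact prod_le_prod (fun k _ => sub_nonneg.2 (ht k).2) fun k _ => by
    linarith [Real.add_one_le_exp (-t k)]

/-- Xu's lemma. -/
theorem tendsto_zero_of_le_one_sub_mul_add {a t b : ℕ → ℝ} (ha : ∀ n, 0 ≤ a n)
    (ht : ∀ n, t n ∈ Set.Icc (0 : ℝ) 1) (hdiv : ¬ Summable t) (hb : ∀ n, 0 ≤ b n)
    (hbs : Summable b) (hrec : ∀ n, a (n + 1) ≤ (1 - t n) * a n + b n) :
    Tendsto a atTop (𝓝 0) := by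
  refine tendsto_order.2 ⟨fun c hc => .of_forall fun m => hc.trans_le (ha m), fun ε hε => ?_⟩
  obtain ⟨n, hn⟩ := ((tendsto_sum_nat_add b).eventually (gt_mem_nhds (half_pos hε))).exists
  have hprod := (tendsto_prod_range_one_sub_zero (fun k => ht (k + n))
    ((summable_nat_add_iff n).not.2 hdiv)).mul_const (a n)
  rw [zero_mul] at hprod
  rw [← map_add_atTop_eq_nat n, eventually_map]
  filter_upwards [hprod.eventually (gt_mem_nhds (half_pos hε))] with m hm
  have hshift := le_prod_one_sub_mul_add_sum (a := fun k => a (k + n)) (fun k => ht (k + n))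
    (fun k => hb (k + n)) (fun k => by simpa only [add_right_comm k 1 n] using hrec (k + n)) m
  have htail : ∑ k ∈ range m, b (k + n) ≤ ∑' k, b (k + n) :=
    ((summable_nat_add_iff n).2 hbs).sum_le_tsum _ fun k _ => hb (k + n)
  rw [zero_add] at hshift
  linarith

theorem not_summable_of_tendsto_sum_Icc {f : ℕ → ℝ}
    (h : Tendsto (fun m => ∑ n ∈ Icc 1 m, f n) atTop atTop) : ¬ Summable f := by
  intro hf
  have hconv : Tendsto (fun m => ∑ n ∈ Icc 1 m, f n) atTop (𝓝 (∑' n, f n - f 0)) := by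
    refine ((hf.tendsto_sum_tsum_nat.comp (tendsto_add_atTop_nat 1)).sub_const (f 0)).congr
      fun m => ?_
    rw [Function.comp_apply, ← Ico_add_one_right_eq_Icc, sum_Ico_eq_sub _ (by omega)]
    simp
  exact not_tendsto_nhds_of_tendsto_atTop h _ hconv

theorem iterComp_mem {Y : Type*} {C : Set Y} {T : ℕ → Y → Y}
    (hT : ∀ n, Set.MapsTo (T (n + 1)) C C) (n : ℕ) {z : Y} (hz : z ∈ C) :
    ∀ k, iterComp T n k z ∈ C
  | 0 => hz
  | k + 1 => hT (n + k) (iterComp_mem hT n hz k)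

section Iteration

variable {X : Type*} [NormedAddCommGroup X] [NormedSpace ℝ X] {C : Set X} {T : ℕ → X → X}
  {lam : ℕ → ℝ} {u : X} {x : ℕ → X} {M : ℝ}

theorem halpern_mem (hC : Convex ℝ C) (hT : ∀ n, Set.MapsTo (T (n + 1)) C C)
    (hlam : ∀ n, lam (n + 1) ∈ Set.Icc (0 : ℝ) 1) (hu : u ∈ C) (hx0 : x 0 = u)
    (hx : ∀ n, x (n + 1) = T (n + 1) (lam (n + 1) • u + (1 - lam (n + 1)) • x n)) :
    ∀ n, x n ∈ C
  | 0 => hx0 ▸ hu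
  | n + 1 => hx n ▸ hT n (hC hu (halpern_mem hC hT hlam hu hx0 hx n) (hlam n).1
      (sub_nonneg.2 (hlam n).2) (add_sub_cancel _ _))

theorem norm_halpern_sub_shift_le {N : ℕ} (hTL : ∀ n, LipschitzOnWith 1 (T (n + 1)) C)
    (hper : ∀ n, T (n + N + 1) = T (n + 1)) (hlam : ∀ n, lam (n + 1) ∈ Set.Icc (0 : ℝ) 1)
    (hy : ∀ n, lam (n + 1) • u + (1 - lam (n + 1)) • x n ∈ C) (hM : ∀ n, ‖x n - u‖ ≤ M)
    (hx : ∀ n, x (n + 1) = T (n + 1) (lam (n + 1) • u + (1 - lam (n + 1)) • x n)) (n : ℕ) :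
    ‖x (n + 1 + N) - x (n + 1)‖ ≤
      (1 - lam (n + 1 + N)) * ‖x (n + N) - x n‖ + M * |lam (n + 1 + N) - lam (n + 1)| := by
  rw [add_right_comm n 1 N]
  have hl := hlam (n + N)
  calc ‖x (n + N + 1) - x (n + 1)‖
      ≤ ‖(lam (n + N + 1) • u + (1 - lam (n + N + 1)) • x (n + N))
          - (lam (n + 1) • u + (1 - lam (n + 1)) • x n)‖ := by
        rw [hx, hx, hper]
        simpa using (hTL n).norm_sub_le (hy (n + N)) (hy n)
    _ = ‖(1 - lam (n + N + 1)) • (x (n + N) - x n)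
          + (lam (n + N + 1) - lam (n + 1)) • (u - x n)‖ := by
        congr 1; module
    _ ≤ (1 - lam (n + N + 1)) * ‖x (n + N) - x n‖ + M * |lam (n + N + 1) - lam (n + 1)| := by
        refine (norm_add_le _ _).trans (add_le_add ?_ ?_)
        · rw [norm_smul, Real.norm_of_nonneg (sub_nonneg.2 hl.2)]
        · rw [norm_smul, Real.norm_eq_abs, mul_comm, norm_sub_rev]
          exact mul_le_mul_of_nonneg_right (hM n) (abs_nonneg _)

theorem norm_iterComp_sub_le (hT : ∀ n, Set.MapsTo (T (n + 1)) C C)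
    (hTL : ∀ n, LipschitzOnWith 1 (T (n + 1)) C) (hlam : ∀ n, 0 ≤ lam (n + 1))
    (hxC : ∀ n, x n ∈ C) (hy : ∀ n, lam (n + 1) • u + (1 - lam (n + 1)) • x n ∈ C)
    (hM : ∀ n, ‖x n - u‖ ≤ M)
    (hx : ∀ n, x (n + 1) = T (n + 1) (lam (n + 1) • u + (1 - lam (n + 1)) • x n)) (n k : ℕ) :
    ‖iterComp T n k (x n) - x (n + k)‖ ≤ M * ∑ j ∈ range k, lam (n + j + 1) := by
  induction k with
  | zero => simp [iterComp]
  | succ k ih =>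
    calc ‖iterComp T n (k + 1) (x n) - x (n + (k + 1))‖
        = ‖T (n + k + 1) (iterComp T n k (x n))
            - T (n + k + 1) (lam (n + k + 1) • u + (1 - lam (n + k + 1)) • x (n + k))‖ := by
          rw [← hx]; rfl
      _ ≤ ‖iterComp T n k (x n) - (lam (n + k + 1) • u + (1 - lam (n + k + 1)) • x (n + k))‖ := by
          simpa using (hTL (n + k)).norm_sub_le (iterComp_mem hT n (hxC n) k) (hy (n + k))
      _ = ‖(iterComp T n k (x n) - x (n + k)) + lam (n + k + 1) • (x (n + k) - u)‖ := by
          congr 1; module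
      _ ≤ ‖iterComp T n k (x n) - x (n + k)‖ + lam (n + k + 1) * M := by
          refine (norm_add_le _ _).trans (add_le_add_right ?_ _)
          rw [norm_smul, Real.norm_of_nonneg (hlam (n + k))]
          exact mul_le_mul_of_nonneg_left (hM _) (hlam _)
      _ ≤ M * ∑ j ∈ range (k + 1), lam (n + j + 1) := by
          rw [sum_range_succ, mul_add]
          linarith

end Iteration

/-- Asymptotic regularity of the cyclic iteration
`x (n+1) = T (n+1) (λ_{n+1} • u + (1 - λ_{n+1}) • x n)` in a real normed space:
if `λ_n → 0`, `∑ |λ_{n+N} - λ_n| < ∞`, `∑ λ_n = ∞` and `(x_n)` is bounded,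
then `‖x n - T_{n+N}⋯T_{n+1} (x n)‖ → 0`. -/
theorem stmt_14 {X : Type*} [NormedAddCommGroup X] [NormedSpace ℝ X]
    (N : ℕ) (hN : 1 ≤ N) (C : Set X) (hC : Convex ℝ C)
    (T : ℕ → X → X)
    (hTmap : ∀ i, 1 ≤ i → i ≤ N → Set.MapsTo (T i) C C)
    (hTne : ∀ i, 1 ≤ i → i ≤ N → ∀ x ∈ C, ∀ y ∈ C, ‖T i x - T i y‖ ≤ ‖x - y‖)
    (hcyc : ∀ n, 1 ≤ n → T n = T ((n - 1) % N + 1))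
    (lam : ℕ → ℝ) (hlam : ∀ n, 1 ≤ n → lam n ∈ Set.Icc (0 : ℝ) 1)
    (hlam0 : Filter.Tendsto lam Filter.atTop (nhds 0))
    (hsum : Summable (fun n : ℕ => |lam (n + 1 + N) - lam (n + 1)|))
    (hdiv : Filter.Tendsto (fun m : ℕ => ∑ n ∈ Finset.Icc 1 m, lam n)
      Filter.atTop Filter.atTop)
    (u : X) (hu : u ∈ C) (x : ℕ → X) (hx0 : x 0 = u)
    (hx : ∀ n : ℕ, x (n + 1) = T (n + 1) (lam (n + 1) • u + (1 - lam (n + 1)) • x n))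
    (hbdd : Bornology.IsBounded (Set.range x)) :
    Filter.Tendsto (fun n : ℕ => ‖x n - iterComp T n N (x n)‖)
      Filter.atTop (nhds 0) := by
  have hcyc' (n : ℕ) : T (n + 1) = T (n % N + 1) := by simpa using hcyc (n + 1) n.succ_pos
  have hmod (n : ℕ) : n % N + 1 ≤ N := Nat.mod_lt n hN
  have hT (n : ℕ) : Set.MapsTo (T (n + 1)) C C :=
    hcyc' n ▸ hTmap _ le_add_self (hmod n)
  have hTL (n : ℕ) : LipschitzOnWith 1 (T (n + 1)) C := hcyc' n ▸ .of_dist_le_mul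
    fun y hy z hz => by simpa [dist_eq_norm] using hTne _ le_add_self (hmod n) y hy z hz
  have hper (n : ℕ) : T (n + N + 1) = T (n + 1) := by rw [hcyc', hcyc' n, Nat.add_mod_right]
  have hlam' (n : ℕ) : lam (n + 1) ∈ Set.Icc (0 : ℝ) 1 := hlam _ n.succ_pos
  have hxC := halpern_mem hC hT hlam' hu hx0 hx
  have hy (n : ℕ) : lam (n + 1) • u + (1 - lam (n + 1)) • x n ∈ C :=
    hC hu (hxC n) (hlam' n).1 (sub_nonneg.2 (hlam' n).2) (add_sub_cancel _ _)
  obtain ⟨M, hM⟩ := (Metric.isBounded_iff_subset_closedBall u).1 hbdd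
  have hM' (n : ℕ) : ‖x n - u‖ ≤ M := by simpa [dist_eq_norm] using hM ⟨n, rfl⟩
  have hshift : ¬ Summable fun n => lam (n + 1 + N) := by
    simpa only [add_assoc, add_comm 1 N] using
      (summable_nat_add_iff (N + 1)).not.2 (not_summable_of_tendsto_sum_Icc hdiv)
  have hA : Tendsto (fun n => ‖x (n + N) - x n‖) atTop (𝓝 0) :=
    tendsto_zero_of_le_one_sub_mul_add (fun n => norm_nonneg _) (fun n => hlam _ (by omega))
      hshift (fun n => mul_nonneg ((norm_nonneg _).trans (hM' 0)) (abs_nonneg _))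
      (hsum.mul_left M) (norm_halpern_sub_shift_le hTL hper hlam' hy hM' hx)
  have hB : Tendsto (fun n => M * ∑ j ∈ range N, lam (n + j + 1)) atTop (𝓝 0) := by
    simpa [add_assoc] using (tendsto_finsetSum (range N) fun j _ =>
      hlam0.comp (tendsto_add_atTop_nat (j + 1))).const_mul M
  refine squeeze_zero (fun n => norm_nonneg _) (fun n => ?_) (by simpa using hA.add hB)
  calc ‖x n - iterComp T n N (x n)‖
      ≤ ‖x (n + N) - x n‖ + ‖iterComp T n N (x n) - x (n + N)‖ := by
        rw [norm_sub_rev (x (n + N)), norm_sub_rev (iterComp T n N (x n))]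
        exact norm_sub_le_norm_sub_add_norm_sub _ _ _
    _ ≤ _ := add_le_add_right
        (norm_iterComp_sub_le hT hTL (fun n => (hlam' n).1) hxC hy hM' hx n N) _
end

section
/- For all μ ∈ (0,1] and all t ∈ [0,1], sin(tμπ/2) / sin(μπ/2) ≤ t + (1 − cos(μπ/2))·(1 − t). -/
/-!
Put `θ = μπ/2 ∈ (0, π/2]`. Writing `tθ = θ - (1 - t)θ`,
`sin (tθ) = sin θ cos ((1 - t)θ) - cos θ sin ((1 - t)θ)`. The first term is at most `sin θ`, and
by concavity of `sin` on `[0, π]` the second is at least `cos θ · (1 - t) sin θ`, since `cos θ ≥ 0`.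
Hence `sin (tθ) ≤ (1 - (1 - t) cos θ) sin θ = (t + (1 - cos θ)(1 - t)) sin θ`.
-/

open Real

lemma Real.mul_sin_le_sin_mul {θ t : ℝ} (hθ0 : 0 ≤ θ) (hθπ : θ ≤ π) (ht0 : 0 ≤ t) (ht1 : t ≤ 1) :
    t * sin θ ≤ sin (t * θ) := by
  simpa using strictConcaveOn_sin_Icc.concaveOn.2 (Set.left_mem_Icc.2 pi_pos.le) ⟨hθ0, hθπ⟩
    (sub_nonneg.2 ht1) ht0 (sub_add_cancel 1 t)

lemma Real.sin_mul_le {θ t : ℝ} (hθ0 : 0 ≤ θ) (hθ : θ ≤ π / 2) (ht0 : 0 ≤ t) (ht1 : t ≤ 1) :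
    sin (t * θ) ≤ (t + (1 - cos θ) * (1 - t)) * sin θ := by
  have hcos : 0 ≤ cos θ := cos_nonneg_of_mem_Icc ⟨by linarith [pi_pos], hθ⟩
  have hsin : 0 ≤ sin θ := sin_nonneg_of_nonneg_of_le_pi hθ0 (by linarith [pi_pos])
  have hconc : (1 - t) * sin θ ≤ sin ((1 - t) * θ) :=
    mul_sin_le_sin_mul hθ0 (by linarith [pi_pos]) (by linarith) (by linarith)
  have hfirst : sin θ * cos ((1 - t) * θ) ≤ sin θ :=
    mul_le_of_le_one_right hsin (cos_le_one _)
  have hsecond : cos θ * ((1 - t) * sin θ) ≤ cos θ * sin ((1 - t) * θ) :=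
    mul_le_mul_of_nonneg_left hconc hcos
  calc sin (t * θ) = sin θ * cos ((1 - t) * θ) - cos θ * sin ((1 - t) * θ) := by
        rw [← sin_sub]; ring_nf
    _ ≤ sin θ - cos θ * ((1 - t) * sin θ) := by linarith
    _ = (t + (1 - cos θ) * (1 - t)) * sin θ := by ring

/-- For all `μ ∈ (0,1]` and `t ∈ [0,1]`,
`sin(tμπ/2) / sin(μπ/2) ≤ t + (1 - cos(μπ/2))·(1 - t)`. -/
theorem stmt_15 (μ t : ℝ) (hμ0 : 0 < μ) (hμ1 : μ ≤ 1) (ht0 : 0 ≤ t) (ht1 : t ≤ 1) :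
    Real.sin (t * μ * Real.pi / 2) / Real.sin (μ * Real.pi / 2) ≤
      t + (1 - Real.cos (μ * Real.pi / 2)) * (1 - t) := by
  have hθ0 : 0 < μ * π / 2 := by positivity
  have hθ : μ * π / 2 ≤ π / 2 := by gcongr; exact mul_le_of_le_one_left pi_pos.le hμ1
  have hsin : 0 < sin (μ * π / 2) := sin_pos_of_pos_of_lt_pi hθ0 (by linarith [pi_pos])
  rw [div_le_iff₀ hsin, show t * μ * π / 2 = t * (μ * π / 2) by ring]
  exact sin_mul_le hθ0.le hθ ht0 ht1
end
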